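/- arXiv:1908.04647 — 3 statements merged into one kernel-verified Lean document; each statement's English description precedes it below -/
import Mathlib

section
/- Let V and Q be nonzero finite-dimensional real inner product spaces. Let A : V × V → ℝ be a bilinear form satisfying A(v,v) ≥ α‖v‖² for all v ∈ V (with α > 0) and |A(u,v)| ≤ M_A‖u‖‖v‖ for all u,v ∈ V, and let B : V × Q → ℝ be a bilinear form with |B(v,q)| ≤ M_B‖v‖‖q‖ for all v ∈ V, q ∈ Q, which satisfies the inf-sup condition: for every q ∈ Q with q ≠ 0 one has sup over nonzero v ∈ V of B(v,q)/(‖v‖·‖q‖) ≥ β, for some β > 0. Then there exists a constant C > 0, depending only on α, M_A and M_B (and in particular independent of β and of δ), such that for every δ ∈ [0,1], the bilinear form a(u,p;v,q) := A(u,v) + B(v,p) − B(u,q) + δ⟨p,q⟩ satisfies the inf-sup bound: the infimum over nonzero (u,p) ∈ V × Q of the supremum over nonzero (v,q) ∈ V × Q of a(u,p;v,q)/(|||(u,p)||| · |||(v,q)|||) is at least C·max{β², δ}, where |||(v,q)|||² := ‖v‖² + (1+δ)‖q‖². -/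
/-!
Given `(u, p)`, the inf-sup condition provides `w` with `‖w‖ = ‖p‖` and `B(w, p) ≥ (β/2)‖p‖²`
(`w = 0` if `p = 0`). Test with `(u + θw, p)`, `θ = αβ/(2 M_A²)`: the terms `±B(u, p)` cancel,
coercivity bounds `A(u, u)` from below and Young's inequality absorbs `θ A(u, w)`, so
`a(u, p; u + θw, p) ≥ (α/2)‖u‖² + (αβ²/(8 M_A²) + δ)‖p‖²`, while
`|||(u + θw, p)||| ≤ (1 + θ) |||(u, p)|||`. Boundedness of `B` forces `β ≤ 2 M_B`, so these
coefficients and `θ` are controlled in terms of `α`, `M_A`, `M_B` alone.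
-/

open scoped RealInnerProductSpace

namespace MixedInfSup

lemma le_ciInf_ciSup {L ι κ : Type*} [ConditionallyCompleteLattice L] [Nonempty ι]
    {f : ι → κ → L} {c : L}
    (hbdd : ∀ i, BddAbove (Set.range (f i))) (h : ∀ i, ∃ j, c ≤ f i j) :
    c ≤ ⨅ i, ⨆ j, f i j :=
  le_ciInf fun i => (h i).elim fun j hj => le_ciSup_of_le (hbdd i) j hj

lemma div_mul_le_div_mul {a n m k c s : ℝ} (hn : 0 < n) (hm : 0 < m) (hk : 0 < k)
    (hmk : m ≤ k * n) (hcs : 0 ≤ c * s) (ha : c * s * n ^ 2 ≤ 2 * a) :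
    c / (2 * k) * s ≤ a / (n * m) := by
  rw [le_div_iff₀ (mul_pos hn hm)]
  calc c / (2 * k) * s * (n * m) = c * s / (2 * k) * (n * m) := by ring
    _ ≤ c * s / (2 * k) * (n * (k * n)) := by gcongr
    _ = c * s * n ^ 2 / 2 := by field_simp
    _ ≤ a := by linarith

noncomputable def energyConstant (α M_A M_B : ℝ) : ℝ := α / (8 * (M_A ^ 2 + 4 * M_B ^ 2 + 1))

/-- `1 + α |M_B| / M_A²` bounds `1 + θ` for the step `θ = α β / (2 M_A²)`, since `β ≤ 2 M_B`. -/
noncomputable def stabilityConstant (α M_A M_B : ℝ) : ℝ :=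
  energyConstant α M_A M_B / (2 * (1 + α * |M_B| / M_A ^ 2))

lemma energyConstant_pos {α M_A M_B : ℝ} (hα : 0 < α) : 0 < energyConstant α M_A M_B := by
  unfold energyConstant
  positivity

lemma stabilityConstant_pos {α M_A M_B : ℝ} (hα : 0 < α) : 0 < stabilityConstant α M_A M_B := by
  have := energyConstant_pos (M_A := M_A) (M_B := M_B) hα
  unfold stabilityConstant
  positivity

lemma energyConstant_mul_max_le {α M_A M_B β δ θ : ℝ} (hα : 0 < α) (hMA : α ≤ M_A)
    (hβ : 0 < β) (hβM : β ≤ 2 * M_B) (hδ0 : 0 ≤ δ) (hδ1 : δ ≤ 1)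
    (hθrel : 2 * θ * M_A ^ 2 = α * β) :
    energyConstant α M_A M_B * max (β ^ 2) δ ≤ α ∧
      energyConstant α M_A M_B * max (β ^ 2) δ ≤ θ * β / 4 + δ := by
  set c := energyConstant α M_A M_B with hc
  have hD : 0 < 8 * (M_A ^ 2 + 4 * M_B ^ 2 + 1) := by positivity
  have hcD : c * (8 * (M_A ^ 2 + 4 * M_B ^ 2 + 1)) = α := div_mul_cancel₀ _ hD.ne'
  have hc0 : 0 ≤ c := (energyConstant_pos hα).le
  have hβ2 : β ^ 2 ≤ 4 * M_B ^ 2 := by nlinarith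
  constructor
  · have hmax : max (β ^ 2) δ ≤ 4 * M_B ^ 2 + 1 :=
      max_le (by linarith) (by nlinarith [sq_nonneg M_B])
    nlinarith [mul_le_mul_of_nonneg_left hmax hc0, sq_nonneg M_A]
  · have hmax : max (β ^ 2) δ ≤ β ^ 2 + δ := max_le (by linarith) (by nlinarith)
    -- `c ≤ 1` because `α ≤ M_A ≤ (M_A ^ 2 + 1) / 2`
    have hc1 : c ≤ 1 := by nlinarith [sq_nonneg (M_A - 1), sq_nonneg M_B]
    have hcβ : c * β ^ 2 ≤ θ * β / 4 := by
      refine le_of_mul_le_mul_left ?_ (by nlinarith : (0 : ℝ) < 8 * M_A ^ 2)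
      calc 8 * M_A ^ 2 * (c * β ^ 2) = c * (8 * M_A ^ 2) * β ^ 2 := by ring
        _ ≤ c * (8 * (M_A ^ 2 + 4 * M_B ^ 2 + 1)) * β ^ 2 := by gcongr; nlinarith
        _ = 8 * M_A ^ 2 * (θ * β / 4) := by rw [hcD]; linear_combination (-β) * hθrel
    nlinarith [mul_le_mul_of_nonneg_left hmax hc0]

variable {V Q : Type*} [NormedAddCommGroup V] [NormedAddCommGroup Q]

noncomputable def tripleNorm (δ : ℝ) (x : V × Q) : ℝ := √(‖x.1‖ ^ 2 + (1 + δ) * ‖x.2‖ ^ 2)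

section tripleNorm

variable {δ : ℝ}

lemma tripleNorm_nonneg (x : V × Q) : 0 ≤ tripleNorm δ x := Real.sqrt_nonneg _

lemma sq_tripleNorm (hδ : -1 ≤ δ) (x : V × Q) :
    tripleNorm δ x ^ 2 = ‖x.1‖ ^ 2 + (1 + δ) * ‖x.2‖ ^ 2 :=
  Real.sq_sqrt (by nlinarith [sq_nonneg ‖x.1‖, sq_nonneg ‖x.2‖])

lemma norm_fst_le_tripleNorm (hδ : -1 ≤ δ) (x : V × Q) : ‖x.1‖ ≤ tripleNorm δ x :=
  Real.le_sqrt_of_sq_le (by nlinarith [sq_nonneg ‖x.2‖])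

lemma norm_snd_le_tripleNorm (hδ : 0 ≤ δ) (x : V × Q) : ‖x.2‖ ≤ tripleNorm δ x :=
  Real.le_sqrt_of_sq_le (by nlinarith [sq_nonneg ‖x.1‖, sq_nonneg ‖x.2‖])

lemma tripleNorm_pos (hδ : -1 < δ) {x : V × Q} (hx : x ≠ 0) : 0 < tripleNorm δ x := by
  have hmax : 0 < max ‖x.1‖ ‖x.2‖ := Prod.norm_def x ▸ norm_pos_iff.2 hx
  refine Real.sqrt_pos.2 ?_
  rcases lt_max_iff.1 hmax with h | h
  · nlinarith [sq_nonneg ‖x.2‖]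
  · nlinarith [sq_nonneg ‖x.1‖, mul_pos (by linarith : (0 : ℝ) < 1 + δ) (pow_pos h 2)]

lemma tripleNorm_add_fst_le (hδ : -1 ≤ δ) (u z : V) (p : Q) :
    tripleNorm δ (u + z, p) ≤ tripleNorm δ (u, p) + ‖z‖ := by
  have hN := sq_tripleNorm hδ (u, p)
  have hu := norm_fst_le_tripleNorm hδ (u, p)
  have huz := norm_add_le u z
  refine Real.sqrt_le_iff.2 ⟨by positivity [tripleNorm_nonneg (δ := δ) (u, p)], ?_⟩
  dsimp only at hN hu ⊢
  nlinarith [norm_nonneg (u + z), norm_nonneg z, norm_nonneg u]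

lemma abs_le_abs_mul_tripleNorm {t M a b : ℝ} (x y : V × Q) (h : |t| ≤ M * a * b)
    (ha : 0 ≤ a) (hb : 0 ≤ b) (hax : a ≤ tripleNorm δ x) (hby : b ≤ tripleNorm δ y) :
    |t| ≤ |M| * (tripleNorm δ x * tripleNorm δ y) :=
  calc |t| ≤ |M| * (a * b) := by
        rw [← mul_assoc]; exact h.trans (by gcongr; exact le_abs_self M)
    _ ≤ |M| * (tripleNorm δ x * tripleNorm δ y) := by gcongr; exact tripleNorm_nonneg x

lemma tripleNorm_add_smul_le [NormedSpace ℝ V] (hδ : 0 ≤ δ) {θ : ℝ} (hθ : 0 ≤ θ) {u w : V}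
    {p : Q} (hw : ‖w‖ = ‖p‖) : tripleNorm δ (u + θ • w, p) ≤ (1 + θ) * tripleNorm δ (u, p) :=
  calc tripleNorm δ (u + θ • w, p) ≤ tripleNorm δ (u, p) + θ * ‖p‖ := by
        simpa [norm_smul, Real.norm_of_nonneg hθ, hw] using
          tripleNorm_add_fst_le (by linarith) u (θ • w) p
    _ ≤ (1 + θ) * tripleNorm δ (u, p) := by
        nlinarith [mul_le_mul_of_nonneg_left (norm_snd_le_tripleNorm hδ (u, p)) hθ]

end tripleNorm

variable [InnerProductSpace ℝ V] [InnerProductSpace ℝ Q]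

def mixedForm (A : V →ₗ[ℝ] V →ₗ[ℝ] ℝ) (B : V →ₗ[ℝ] Q →ₗ[ℝ] ℝ) (δ : ℝ) (x y : V × Q) : ℝ :=
  A x.1 y.1 + B y.1 x.2 - B x.1 y.2 + δ * ⟪x.2, y.2⟫

def InfSupCondition (B : V →ₗ[ℝ] Q →ₗ[ℝ] ℝ) (β : ℝ) : Prop :=
  ∀ q : Q, q ≠ 0 → (⨆ v : {v : V // v ≠ 0}, B v.1 q / (‖v.1‖ * ‖q‖)) ≥ β

section bounds

variable {A : V →ₗ[ℝ] V →ₗ[ℝ] ℝ} {B : V →ₗ[ℝ] Q →ₗ[ℝ] ℝ} {α M_A M_B β δ : ℝ}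

lemma le_of_coercive_of_abs_le [Nontrivial V] (hAcoer : ∀ v : V, A v v ≥ α * ‖v‖ ^ 2)
    (hAbdd : ∀ u v : V, |A u v| ≤ M_A * ‖u‖ * ‖v‖) : α ≤ M_A := by
  obtain ⟨v, hv⟩ := exists_ne (0 : V)
  have hv' := norm_pos_iff.2 hv
  refine le_of_mul_le_mul_right ?_ (pow_pos hv' 2)
  linarith [hAcoer v, hAbdd v v, le_abs_self (A v v)]

lemma mixedForm_le (hAbdd : ∀ u v : V, |A u v| ≤ M_A * ‖u‖ * ‖v‖)
    (hBbdd : ∀ (v : V) (q : Q), |B v q| ≤ M_B * ‖v‖ * ‖q‖) (hδ : 0 ≤ δ) (x y : V × Q) :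
    mixedForm A B δ x y ≤ (|M_A| + 2 * |M_B| + δ) * (tripleNorm δ x * tripleNorm δ y) := by
  have hx₁ := norm_fst_le_tripleNorm (δ := δ) (by linarith) x
  have hx₂ := norm_snd_le_tripleNorm hδ x
  have hy₁ := norm_fst_le_tripleNorm (δ := δ) (by linarith) y
  have hy₂ := norm_snd_le_tripleNorm hδ y
  have hA := abs_le_abs_mul_tripleNorm x y (hAbdd x.1 y.1) (norm_nonneg _) (norm_nonneg _) hx₁ hy₁
  have hB₁ := abs_le_abs_mul_tripleNorm x y ((hBbdd y.1 x.2).trans_eq (by ring))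
    (norm_nonneg _) (norm_nonneg _) hx₂ hy₁
  have hB₂ := abs_le_abs_mul_tripleNorm x y (hBbdd x.1 y.2) (norm_nonneg _) (norm_nonneg _) hx₁ hy₂
  have hinner : δ * ⟪x.2, y.2⟫ ≤ δ * (tripleNorm δ x * tripleNorm δ y) :=
    mul_le_mul_of_nonneg_left ((real_inner_le_norm _ _).trans
      (mul_le_mul hx₂ hy₂ (norm_nonneg _) (tripleNorm_nonneg x))) hδ
  unfold mixedForm
  linarith [le_abs_self (A x.1 y.1), le_abs_self (B y.1 x.2), neg_abs_le (B x.1 y.2)]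

lemma bddAbove_range_mixedForm_div (hAbdd : ∀ u v : V, |A u v| ≤ M_A * ‖u‖ * ‖v‖)
    (hBbdd : ∀ (v : V) (q : Q), |B v q| ≤ M_B * ‖v‖ * ‖q‖) (hδ : 0 ≤ δ) (x : V × Q) :
    BddAbove (Set.range fun y : {y : V × Q // y ≠ 0} =>
      mixedForm A B δ x y.1 / (tripleNorm δ x * tripleNorm δ y.1)) :=
  ⟨_, Set.forall_mem_range.2 fun y => div_le_of_le_mul₀
    (mul_nonneg (tripleNorm_nonneg _) (tripleNorm_nonneg _))
    (by positivity) (mixedForm_le hAbdd hBbdd hδ x y.1)⟩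

lemma InfSupCondition.exists_norm_eq_and_le [Nontrivial V] (hinfsup : InfSupCondition B β)
    (hβ : 0 < β) (p : Q) : ∃ w : V, ‖w‖ = ‖p‖ ∧ β / 2 * ‖p‖ ^ 2 ≤ B w p := by
  rcases eq_or_ne p 0 with rfl | hp
  · exact ⟨0, by simp, by simp⟩
  have : Nonempty {v : V // v ≠ 0} := (exists_ne (0 : V)).elim fun v hv => ⟨⟨v, hv⟩⟩
  obtain ⟨⟨v, hv⟩, hlt⟩ := exists_lt_of_lt_ciSup ((half_lt_self hβ).trans_le (hinfsup p hp))
  have hv' := norm_pos_iff.2 hv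
  have hp' := norm_pos_iff.2 hp
  rw [lt_div_iff₀ (by positivity)] at hlt
  refine ⟨(‖p‖ / ‖v‖) • v, ?_, ?_⟩
  · rw [norm_smul, Real.norm_of_nonneg (by positivity), div_mul_cancel₀ _ hv'.ne']
  · rw [map_smul, LinearMap.smul_apply, smul_eq_mul]
    calc β / 2 * ‖p‖ ^ 2 = ‖p‖ / ‖v‖ * (β / 2 * (‖v‖ * ‖p‖)) := by field_simp
      _ ≤ ‖p‖ / ‖v‖ * B v p := by gcongr

lemma InfSupCondition.le_two_mul [Nontrivial V] [Nontrivial Q] (hinfsup : InfSupCondition B β)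
    (hBbdd : ∀ (v : V) (q : Q), |B v q| ≤ M_B * ‖v‖ * ‖q‖) (hβ : 0 < β) : β ≤ 2 * M_B := by
  obtain ⟨q, hq⟩ := exists_ne (0 : Q)
  obtain ⟨w, hw, hBw⟩ := hinfsup.exists_norm_eq_and_le hβ q
  have hq' := norm_pos_iff.2 hq
  have hBwq := hBbdd w q
  rw [hw] at hBwq
  nlinarith [le_abs_self (B w q), pow_pos hq' 2]

lemma mixedForm_add_smul_ge (hα : 0 < α) (hAcoer : ∀ v : V, A v v ≥ α * ‖v‖ ^ 2)
    (hAbdd : ∀ u v : V, |A u v| ≤ M_A * ‖u‖ * ‖v‖) {θ : ℝ} (hθ : 0 ≤ θ)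
    (hθrel : 2 * θ * M_A ^ 2 = α * β) {u w : V} {p : Q} (hw : ‖w‖ = ‖p‖)
    (hBw : β / 2 * ‖p‖ ^ 2 ≤ B w p) :
    α / 2 * ‖u‖ ^ 2 + (θ * β / 4 + δ) * ‖p‖ ^ 2 ≤ mixedForm A B δ (u, p) (u + θ • w, p) := by
  have hexp : mixedForm A B δ (u, p) (u + θ • w, p)
      = A u u + θ * A u w + θ * B w p + δ * ‖p‖ ^ 2 := by
    simp only [mixedForm, map_add, map_smul, LinearMap.add_apply, LinearMap.smul_apply,
      smul_eq_mul, real_inner_self_eq_norm_sq]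
    ring
  have hAuw : -(M_A * ‖u‖ * ‖p‖) ≤ A u w := hw ▸ neg_le_of_abs_le (hAbdd u w)
  -- Young's inequality, from `(α ‖u‖ - θ M_A ‖p‖)² ≥ 0` and `θ² M_A² = θ α β / 2`
  have hyoung : θ * M_A * ‖u‖ * ‖p‖ ≤ α / 2 * ‖u‖ ^ 2 + θ * β / 4 * ‖p‖ ^ 2 := by
    refine le_of_mul_le_mul_left ?_ (by positivity : (0 : ℝ) < 2 * α)
    have hsq : 2 * α * (θ * β / 4 * ‖p‖ ^ 2) = (θ * M_A * ‖p‖) ^ 2 := by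
      linear_combination (-θ * ‖p‖ ^ 2 / 2) * hθrel
    nlinarith [sq_nonneg (α * ‖u‖ - θ * M_A * ‖p‖)]
  rw [hexp]
  nlinarith [hAcoer u, mul_le_mul_of_nonneg_left hAuw hθ, mul_le_mul_of_nonneg_left hBw hθ]

lemma exists_le_mixedForm_div [Nontrivial V] (hα : 0 < α)
    (hAcoer : ∀ v : V, A v v ≥ α * ‖v‖ ^ 2) (hAbdd : ∀ u v : V, |A u v| ≤ M_A * ‖u‖ * ‖v‖)
    (hMA : α ≤ M_A) (hβ : 0 < β) (hβM : β ≤ 2 * M_B) (hinfsup : InfSupCondition B β)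
    (hδ : δ ∈ Set.Icc 0 1) {x : V × Q} (hx : x ≠ 0) :
    ∃ y : V × Q, y ≠ 0 ∧ stabilityConstant α M_A M_B * max (β ^ 2) δ ≤
      mixedForm A B δ x y / (tripleNorm δ x * tripleNorm δ y) := by
  obtain ⟨u, p⟩ := x
  obtain ⟨hδ0, hδ1⟩ := hδ
  obtain ⟨w, hw, hBw⟩ := hinfsup.exists_norm_eq_and_le hβ p
  have hMA0 : 0 < M_A := hα.trans_le hMA
  set θ := α * β / (2 * M_A ^ 2) with hθ
  have hθ0 : 0 ≤ θ := by positivity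
  have hθrel : 2 * θ * M_A ^ 2 = α * β := by rw [hθ]; field_simp
  have hθΘ : θ ≤ α * |M_B| / M_A ^ 2 := by
    rw [hθ, div_le_div_iff₀ (by positivity) (by positivity)]
    have hβ' : β ≤ 2 * |M_B| := hβM.trans (by linarith [le_abs_self M_B])
    nlinarith [mul_le_mul_of_nonneg_left hβ' (by positivity : 0 ≤ α * M_A ^ 2)]
  have hy : (u + θ • w, p) ≠ 0 := by
    intro h
    obtain ⟨hu, rfl⟩ := Prod.mk_eq_zero.1 h
    rw [norm_zero, norm_eq_zero] at hw
    exact hx (by simpa [hw] using hu)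
  obtain ⟨hcα, hcp⟩ := energyConstant_mul_max_le hα hMA hβ hβM hδ0 hδ1 hθrel
  have ht : 0 ≤ energyConstant α M_A M_B * max (β ^ 2) δ :=
    mul_nonneg (energyConstant_pos hα).le (le_max_of_le_right hδ0)
  refine ⟨_, hy, div_mul_le_div_mul (tripleNorm_pos (by linarith) hx)
    (tripleNorm_pos (by linarith) hy) (by positivity) ?_ ht ?_⟩
  · exact (tripleNorm_add_smul_le hδ0 hθ0 hw).trans
      (by gcongr; exact tripleNorm_nonneg _)
  · have hlow := mixedForm_add_smul_ge (δ := δ) (u := u) hα hAcoer hAbdd hθ0 hθrel hw hBw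
    rw [sq_tripleNorm (by linarith)]
    dsimp only
    nlinarith [mul_le_mul_of_nonneg_right hcα (sq_nonneg ‖u‖),
      mul_le_mul_of_nonneg_right hcp (sq_nonneg ‖p‖),
      mul_nonneg (mul_nonneg ht (sub_nonneg.2 hδ1)) (sq_nonneg ‖p‖)]

end bounds

end MixedInfSup

open MixedInfSup

theorem stmt_0_general
    {V Q : Type*}
    [NormedAddCommGroup V] [InnerProductSpace ℝ V] [Nontrivial V]
    [NormedAddCommGroup Q] [InnerProductSpace ℝ Q] [Nontrivial Q]
    (A : V →ₗ[ℝ] V →ₗ[ℝ] ℝ) (B : V →ₗ[ℝ] Q →ₗ[ℝ] ℝ)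
    (α M_A M_B : ℝ) (hα : 0 < α)
    (hAcoer : ∀ v : V, A v v ≥ α * ‖v‖ ^ 2)
    (hAbdd : ∀ u v : V, |A u v| ≤ M_A * ‖u‖ * ‖v‖)
    (hBbdd : ∀ (v : V) (q : Q), |B v q| ≤ M_B * ‖v‖ * ‖q‖) :
    ∃ C : ℝ, 0 < C ∧
      ∀ β : ℝ, 0 < β →
        (∀ q : Q, q ≠ 0 →
          (⨆ v : {v : V // v ≠ 0}, B v.1 q / (‖v.1‖ * ‖q‖)) ≥ β) →
        ∀ δ : ℝ, δ ∈ Set.Icc (0 : ℝ) 1 →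
          (⨅ up : {up : V × Q // up ≠ 0},
            ⨆ vq : {vq : V × Q // vq ≠ 0},
              (A up.1.1 vq.1.1 + B vq.1.1 up.1.2 - B up.1.1 vq.1.2
                  + δ * ⟪up.1.2, vq.1.2⟫) /
                (Real.sqrt (‖up.1.1‖ ^ 2 + (1 + δ) * ‖up.1.2‖ ^ 2) *
                  Real.sqrt (‖vq.1.1‖ ^ 2 + (1 + δ) * ‖vq.1.2‖ ^ 2)))
            ≥ C * max (β ^ 2) δ := by
  have hMA : α ≤ M_A := le_of_coercive_of_abs_le hAcoer hAbdd
  refine ⟨stabilityConstant α M_A M_B, stabilityConstant_pos hα, fun β hβ hinfsup δ hδ => ?_⟩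
  have hβM : β ≤ 2 * M_B := InfSupCondition.le_two_mul hinfsup hBbdd hβ
  have : Nonempty {x : V × Q // x ≠ 0} :=
    (exists_ne (0 : V)).elim fun v hv => ⟨⟨(v, 0), by simp [hv]⟩⟩
  refine le_ciInf_ciSup (f := fun x y : {x : V × Q // x ≠ 0} =>
      mixedForm A B δ x.1 y.1 / (tripleNorm δ x.1 * tripleNorm δ y.1))
    (fun x => bddAbove_range_mixedForm_div hAbdd hBbdd hδ.1 x.1) fun x =>
    (exists_le_mixedForm_div hα hAcoer hAbdd hMA hβ hβM hinfsup hδ x.2).elim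
      fun y hy => ⟨⟨y, hy.1⟩, hy.2⟩

/-- Abstract discrete inf-sup stability for the mixed form
`a(u,p;v,q) = A(u,v) + B(v,p) - B(u,q) + δ⟪p,q⟫` with the DG-type norm
`|||(v,q)|||² = ‖v‖² + (1+δ)‖q‖²`. -/
theorem stmt_0
    {V Q : Type*}
    [NormedAddCommGroup V] [InnerProductSpace ℝ V] [FiniteDimensional ℝ V] [Nontrivial V]
    [NormedAddCommGroup Q] [InnerProductSpace ℝ Q] [FiniteDimensional ℝ Q] [Nontrivial Q]
    (A : V →ₗ[ℝ] V →ₗ[ℝ] ℝ) (B : V →ₗ[ℝ] Q →ₗ[ℝ] ℝ)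
    (α M_A M_B : ℝ) (hα : 0 < α)
    (hAcoer : ∀ v : V, A v v ≥ α * ‖v‖ ^ 2)
    (hAbdd : ∀ u v : V, |A u v| ≤ M_A * ‖u‖ * ‖v‖)
    (hBbdd : ∀ (v : V) (q : Q), |B v q| ≤ M_B * ‖v‖ * ‖q‖) :
    ∃ C : ℝ, 0 < C ∧
      ∀ β : ℝ, 0 < β →
        (∀ q : Q, q ≠ 0 →
          (⨆ v : {v : V // v ≠ 0}, B v.1 q / (‖v.1‖ * ‖q‖)) ≥ β) →
        ∀ δ : ℝ, δ ∈ Set.Icc (0 : ℝ) 1 →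
          (⨅ up : {up : V × Q // up ≠ 0},
            ⨆ vq : {vq : V × Q // vq ≠ 0},
              (A up.1.1 vq.1.1 + B vq.1.1 up.1.2 - B up.1.1 vq.1.2
                  + δ * ⟪up.1.2, vq.1.2⟫) /
                (Real.sqrt (‖up.1.1‖ ^ 2 + (1 + δ) * ‖up.1.2‖ ^ 2) *
                  Real.sqrt (‖vq.1.1‖ ^ 2 + (1 + δ) * ‖vq.1.2‖ ^ 2)))
            ≥ C * max (β ^ 2) δ :=
  stmt_0_general A B α M_A M_B hα hAcoer hAbdd hBbdd
end

section
/- Let n ≥ 1, let A be a real n × n matrix whose kernel {x ∈ ℝⁿ : Ax = 0} is one-dimensional, and let D ∈ ℝ^{n×n} be symmetric positive definite. Define Ã := D^{-1/2} A D^{-1/2}. Then the inf-sup constant γ_a, defined as the infimum over all nonzero x ∈ ℝⁿ satisfying xᵀD k = 0 for every k in the kernel of A, of the supremum over all nonzero y ∈ ℝⁿ of (yᵀ A x)/((yᵀ D y)^{1/2} (xᵀ D x)^{1/2}), equals the smallest positive singular value of Ã, i.e. the square root of the smallest nonzero eigenvalue of the symmetric positive-semidefinite matrix ÃᵀÃ.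 -/
open scoped Matrix

/-- For a symmetric positive-definite real matrix `D`, `invSqrtPD D hD` is `D^{-1/2}`,
the inverse of the unique symmetric positive-definite square root of `D`. -/
noncomputable def invSqrtPD {n : ℕ} (D : Matrix (Fin n) (Fin n) ℝ) (hD : D.PosDef) :
    Matrix (Fin n) (Fin n) ℝ :=
  (hD.posSemidef.1.eigenvectorUnitary.1 *
    Matrix.diagonal (Real.sqrt ∘ hD.posSemidef.1.eigenvalues) *
    (star hD.posSemidef.1.eigenvectorUnitary : Matrix (Fin n) (Fin n) ℝ))⁻¹

/-!
With `R = D^{1/2}` we have `A = R Ã R` and `D = R R`, so the substitution `u = R x`, `w = R y`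
turns the quotient into `w ⬝ Ã u / (‖w‖ ‖u‖)` and the `D`-orthogonality to `ker A` into
orthogonality to `ker Ã`. By Cauchy–Schwarz the supremum over `w` is `‖Ã u‖ / ‖u‖`. In an
orthonormal eigenbasis of `ÃᵀÃ` the vector `u` has no component along the eigenvalue `0`, since
those eigenvectors span `ker Ã`; hence `‖Ã u‖² = ∑ λᵢ uᵢ² ≥ μ ‖u‖²` for the least nonzero
eigenvalue `μ`, with equality at an eigenvector for `μ`.
-/

open Matrix

namespace Matrix

variable {ι : Type*} [Fintype ι]

lemma dotProduct_le_sqrt_mul_sqrt (u v : ι → ℝ) : u ⬝ᵥ v ≤ √(u ⬝ᵥ u) * √(v ⬝ᵥ v) := by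
  simpa only [dotProduct, sq] using Real.sum_mul_le_sqrt_mul_sqrt Finset.univ u v

lemma iSup_dotProduct_div_sqrt (z : ι → ℝ) :
    ⨆ w : {w : ι → ℝ // w ≠ 0}, w.1 ⬝ᵥ z / √(w.1 ⬝ᵥ w.1) = √(z ⬝ᵥ z) := by
  rcases eq_or_ne z 0 with rfl | hz
  · simp
  have : Nonempty {w : ι → ℝ // w ≠ 0} := ⟨⟨z, hz⟩⟩
  have hle (w : {w : ι → ℝ // w ≠ 0}) : w.1 ⬝ᵥ z / √(w.1 ⬝ᵥ w.1) ≤ √(z ⬝ᵥ z) :=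
    div_le_of_le_mul₀ (Real.sqrt_nonneg _) (Real.sqrt_nonneg _)
      ((dotProduct_le_sqrt_mul_sqrt _ _).trans_eq (mul_comm _ _))
  exact le_antisymm (ciSup_le hle)
    (le_ciSup_of_le ⟨_, Set.forall_mem_range.2 hle⟩ ⟨z, hz⟩ Real.div_sqrt.ge)

lemma dotProduct_transpose_mulVec_eq_mulVec_dotProduct {α : Type*} [CommSemiring α]
    (R : Matrix ι ι α) (v w : ι → α) : v ⬝ᵥ Rᵀ *ᵥ w = R *ᵥ v ⬝ᵥ w := by
  rw [dotProduct_mulVec, vecMul_transpose]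

lemma dotProduct_transpose_mul_self_mulVec (M : Matrix ι ι ℝ) (u : ι → ℝ) :
    u ⬝ᵥ (Mᵀ * M) *ᵥ u = M *ᵥ u ⬝ᵥ M *ᵥ u := by
  rw [← mulVec_mulVec, dotProduct_transpose_mulVec_eq_mulVec_dotProduct]

variable [DecidableEq ι]

noncomputable def mulVecEquivOfIsUnit {K : Type*} [Field K] {R : Matrix ι ι K} (hR : IsUnit R) :
    (ι → K) ≃ (ι → K) :=
  Equiv.ofBijective R.mulVec ⟨mulVec_injective_iff_isUnit.2 hR, mulVec_surjective_iff_isUnit.2 hR⟩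

namespace IsHermitian

variable {B : Matrix ι ι ℝ} (hB : B.IsHermitian)

lemma eigenvectorBasis_dotProduct_mulVec (i : ι) (w : ι → ℝ) :
    (hB.eigenvectorBasis i).ofLp ⬝ᵥ B *ᵥ w =
      hB.eigenvalues i * ((hB.eigenvectorBasis i).ofLp ⬝ᵥ w) := by
  have hBt : Bᵀ = B := by simpa [conjTranspose_eq_transpose_of_trivial] using hB.eq
  rw [dotProduct_mulVec, ← mulVec_transpose, hBt, hB.mulVec_eigenvectorBasis, smul_dotProduct,
    smul_eq_mul]

lemma sum_sq_eigenvectorBasis_dotProduct (u : ι → ℝ) :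
    ∑ i, ((hB.eigenvectorBasis i).ofLp ⬝ᵥ u) ^ 2 = u ⬝ᵥ u := by
  simpa only [EuclideanSpace.inner_eq_star_dotProduct, star_trivial, dotProduct_comm u, sq] using
    hB.eigenvectorBasis.sum_inner_mul_inner (WithLp.toLp 2 u) (WithLp.toLp 2 u)

lemma sum_eigenvalues_mul_sq_eigenvectorBasis_dotProduct (u : ι → ℝ) :
    ∑ i, hB.eigenvalues i * ((hB.eigenvectorBasis i).ofLp ⬝ᵥ u) ^ 2 = u ⬝ᵥ B *ᵥ u := by
  have h := hB.eigenvectorBasis.sum_inner_mul_inner (WithLp.toLp 2 u) (WithLp.toLp 2 (B *ᵥ u))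
  simp only [EuclideanSpace.inner_eq_star_dotProduct, star_trivial,
    dotProduct_comm (B *ᵥ u), eigenvectorBasis_dotProduct_mulVec] at h
  rw [← h]
  exact Finset.sum_congr rfl fun i _ ↦ by ring

lemma eigenvectorBasis_dotProduct_self (i : ι) :
    (hB.eigenvectorBasis i).ofLp ⬝ᵥ (hB.eigenvectorBasis i).ofLp = 1 := by
  have := real_inner_self_eq_norm_sq (hB.eigenvectorBasis i)
  rwa [EuclideanSpace.inner_eq_star_dotProduct, hB.eigenvectorBasis.orthonormal.1 i, one_pow,
    star_trivial] at this

lemma mul_dotProduct_self_le_dotProduct_mulVec {μ : ℝ} {u : ι → ℝ}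
    (hμ : ∀ i, hB.eigenvalues i ≠ 0 → μ ≤ hB.eigenvalues i)
    (hu : ∀ i, hB.eigenvalues i = 0 → (hB.eigenvectorBasis i).ofLp ⬝ᵥ u = 0) :
    μ * (u ⬝ᵥ u) ≤ u ⬝ᵥ B *ᵥ u := by
  rw [← hB.sum_sq_eigenvectorBasis_dotProduct,
    ← hB.sum_eigenvalues_mul_sq_eigenvectorBasis_dotProduct, Finset.mul_sum]
  refine Finset.sum_le_sum fun i _ ↦ ?_
  by_cases hi : hB.eigenvalues i = 0
  · simp [hi, hu i hi]
  · exact mul_le_mul_of_nonneg_right (hμ i hi) (sq_nonneg _)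

section TransposeMulSelf

variable {M : Matrix ι ι ℝ}

lemma mulVec_eigenvectorBasis_dotProduct_self (hH : (Mᵀ * M).IsHermitian) (i : ι) :
    M *ᵥ (hH.eigenvectorBasis i).ofLp ⬝ᵥ M *ᵥ (hH.eigenvectorBasis i).ofLp = hH.eigenvalues i := by
  rw [← dotProduct_transpose_mul_self_mulVec, hH.eigenvectorBasis_dotProduct_mulVec,
    hH.eigenvectorBasis_dotProduct_self, mul_one]

lemma eigenvectorBasis_dotProduct_eq_zero_of_mulVec_eq_zero (hH : (Mᵀ * M).IsHermitian) {i : ι}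
    (hi : hH.eigenvalues i ≠ 0) {k : ι → ℝ} (hk : M *ᵥ k = 0) :
    (hH.eigenvectorBasis i).ofLp ⬝ᵥ k = 0 := by
  have := hH.eigenvectorBasis_dotProduct_mulVec i k
  rw [← mulVec_mulVec, hk, mulVec_zero, dotProduct_zero, eq_comm] at this
  exact (mul_eq_zero.1 this).resolve_left hi

lemma sInf_eigenvalues_mul_dotProduct_self_le (hH : (Mᵀ * M).IsHermitian) {u : ι → ℝ}
    (hu : ∀ k : ι → ℝ, M *ᵥ k = 0 → u ⬝ᵥ k = 0) :
    sInf {μ : ℝ | μ ≠ 0 ∧ ∃ i, hH.eigenvalues i = μ} * (u ⬝ᵥ u) ≤ M *ᵥ u ⬝ᵥ M *ᵥ u := by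
  have hker (i : ι) (hi : hH.eigenvalues i = 0) : M *ᵥ (hH.eigenvectorBasis i).ofLp = 0 := by
    rw [← dotProduct_self_eq_zero, hH.mulVec_eigenvectorBasis_dotProduct_self, hi]
  have hfin : {μ : ℝ | μ ≠ 0 ∧ ∃ i, hH.eigenvalues i = μ}.Finite :=
    (Set.finite_range hH.eigenvalues).subset fun _ ⟨_, i, hi⟩ ↦ ⟨i, hi⟩
  rw [← dotProduct_transpose_mul_self_mulVec]
  refine hH.mul_dotProduct_self_le_dotProduct_mulVec
    (fun i hi ↦ csInf_le hfin.bddBelow ⟨hi, i, rfl⟩) fun i hi ↦ ?_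
  rw [dotProduct_comm]
  exact hu _ (hker i hi)

end TransposeMulSelf

end IsHermitian

lemma transpose_cfc_sqrt (D : Matrix ι ι ℝ) : (cfc Real.sqrt D)ᵀ = cfc Real.sqrt D := by
  simpa [IsSelfAdjoint, star_eq_conjTranspose] using (cfc_predicate Real.sqrt D :)

namespace PosDef

variable {D : Matrix ι ι ℝ}

lemma cfc_sqrt_mul_self (hD : D.PosDef) : cfc Real.sqrt D * cfc Real.sqrt D = D := by
  rw [← cfc_mul _ _ D]
  conv_rhs => rw [← cfc_id' ℝ D hD.isHermitian.isSelfAdjoint]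
  refine cfc_congr fun x hx ↦ Real.mul_self_sqrt ?_
  obtain ⟨i, rfl⟩ := hD.isHermitian.spectrum_real_eq_range_eigenvalues ▸ hx
  exact hD.eigenvalues_pos i |>.le

lemma isUnit_cfc_sqrt (hD : D.PosDef) : IsUnit (cfc Real.sqrt D) := by
  refine (isUnit_cfc_iff _ _ (ha := hD.isHermitian.isSelfAdjoint)).2 fun x hx ↦ ?_
  obtain ⟨i, rfl⟩ := hD.isHermitian.spectrum_real_eq_range_eigenvalues ▸ hx
  exact (Real.sqrt_pos.2 (hD.eigenvalues_pos i)).ne'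

end PosDef

end Matrix

section InfSup

variable {ι : Type*} [Fintype ι]

noncomputable def infSupConstant (A D : Matrix ι ι ℝ) : ℝ :=
  ⨅ x : {x : ι → ℝ // x ≠ 0 ∧ ∀ k : ι → ℝ, A *ᵥ k = 0 → x ⬝ᵥ D *ᵥ k = 0},
    ⨆ y : {y : ι → ℝ // y ≠ 0},
      y.1 ⬝ᵥ A *ᵥ x.1 / (√(y.1 ⬝ᵥ D *ᵥ y.1) * √(x.1 ⬝ᵥ D *ᵥ x.1))

variable [DecidableEq ι]

lemma iSup_dotProduct_transpose_mul_mul_mulVec_div {R : Matrix ι ι ℝ} (hR : IsUnit R)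
    (M : Matrix ι ι ℝ) (x : ι → ℝ) :
    ⨆ y : {y : ι → ℝ // y ≠ 0}, y.1 ⬝ᵥ (Rᵀ * M * R) *ᵥ x /
        (√(y.1 ⬝ᵥ (Rᵀ * R) *ᵥ y.1) * √(x ⬝ᵥ (Rᵀ * R) *ᵥ x)) =
      √(M *ᵥ (R *ᵥ x) ⬝ᵥ M *ᵥ (R *ᵥ x)) / √(R *ᵥ x ⬝ᵥ R *ᵥ x) := by
  let e := mulVecEquivOfIsUnit hR
  let eNonzero : {y : ι → ℝ // y ≠ 0} ≃ {w : ι → ℝ // w ≠ 0} :=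
    e.subtypeEquiv fun y ↦ (e.injective.ne_iff' (mulVec_zero R)).symm
  simp only [← mulVec_mulVec, dotProduct_transpose_mulVec_eq_mulVec_dotProduct, ← div_div,
    div_eq_mul_inv _ √(R *ᵥ x ⬝ᵥ R *ᵥ x)]
  rw [← Real.iSup_mul_of_nonneg (by positivity), ← iSup_dotProduct_div_sqrt (M *ᵥ (R *ᵥ x))]
  exact congrArg (· * _) (eNonzero.iSup_comp (g := fun w ↦ w.1 ⬝ᵥ M *ᵥ R *ᵥ x / √(w.1 ⬝ᵥ w.1)))

lemma infSupConstant_transpose_mul_mul {R : Matrix ι ι ℝ} (hR : IsUnit R) (M : Matrix ι ι ℝ) :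
    infSupConstant (Rᵀ * M * R) (Rᵀ * R) =
      ⨅ u : {u : ι → ℝ // u ≠ 0 ∧ ∀ k : ι → ℝ, M *ᵥ k = 0 → u ⬝ᵥ k = 0},
        √(M *ᵥ u.1 ⬝ᵥ M *ᵥ u.1) / √(u.1 ⬝ᵥ u.1) := by
  let e := mulVecEquivOfIsUnit hR
  have hker (k : ι → ℝ) : Rᵀ *ᵥ M *ᵥ R *ᵥ k = 0 ↔ M *ᵥ R *ᵥ k = 0 :=
    (mulVec_injective_iff_isUnit.2 ((isUnit_transpose R).2 hR)).eq_iff' (mulVec_zero _)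
  let eConstraint : {x : ι → ℝ // x ≠ 0 ∧ ∀ k, (Rᵀ * M * R) *ᵥ k = 0 → x ⬝ᵥ (Rᵀ * R) *ᵥ k = 0}
      ≃ {u : ι → ℝ // u ≠ 0 ∧ ∀ k, M *ᵥ k = 0 → u ⬝ᵥ k = 0} :=
    e.subtypeEquiv fun x ↦ by
      simp only [← mulVec_mulVec, dotProduct_transpose_mulVec_eq_mulVec_dotProduct, hker]
      exact and_congr (e.injective.ne_iff' (mulVec_zero R)).symm
        (e.forall_congr_right (q := fun k ↦ M *ᵥ k = 0 → R *ᵥ x ⬝ᵥ k = 0))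
  unfold infSupConstant
  simp only [iSup_dotProduct_transpose_mul_mul_mulVec_div hR]
  rw [← eConstraint.iInf_comp]
  rfl

theorem iInf_sqrt_div_sqrt_eq_sqrt_sInf_eigenvalues (M : Matrix ι ι ℝ)
    (hH : (Mᵀ * M).IsHermitian) :
    ⨅ u : {u : ι → ℝ // u ≠ 0 ∧ ∀ k : ι → ℝ, M *ᵥ k = 0 → u ⬝ᵥ k = 0},
        √(M *ᵥ u.1 ⬝ᵥ M *ᵥ u.1) / √(u.1 ⬝ᵥ u.1) =
      √(sInf {μ : ℝ | μ ≠ 0 ∧ ∃ i, hH.eigenvalues i = μ}) := by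
  set S := {μ : ℝ | μ ≠ 0 ∧ ∃ i, hH.eigenvalues i = μ}
  by_cases hS : S.Nonempty
  · obtain ⟨hμ₀, i₀, hi₀⟩ :=
      hS.csInf_mem <| (Set.finite_range hH.eigenvalues).subset fun _ ⟨_, i, hi⟩ ↦ ⟨i, hi⟩
    set μ := sInf S
    set b₀ := (hH.eigenvectorBasis i₀).ofLp
    have hval : M *ᵥ b₀ ⬝ᵥ M *ᵥ b₀ = μ := hi₀ ▸ hH.mulVec_eigenvectorBasis_dotProduct_self i₀
    have hμ : 0 ≤ μ := hval ▸ by simpa using dotProduct_star_self_nonneg (M *ᵥ b₀)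
    have hmem : b₀ ≠ 0 ∧ ∀ k : ι → ℝ, M *ᵥ k = 0 → b₀ ⬝ᵥ k = 0 :=
      ⟨fun h ↦ by simpa [b₀, h] using hH.eigenvectorBasis_dotProduct_self i₀,
        fun _ hk ↦ hH.eigenvectorBasis_dotProduct_eq_zero_of_mulVec_eq_zero (hi₀ ▸ hμ₀) hk⟩
    have hlow (u : {u : ι → ℝ // u ≠ 0 ∧ ∀ k : ι → ℝ, M *ᵥ k = 0 → u ⬝ᵥ k = 0}) :
        √μ ≤ √(M *ᵥ u.1 ⬝ᵥ M *ᵥ u.1) / √(u.1 ⬝ᵥ u.1) := by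
      rw [le_div_iff₀ (Real.sqrt_pos.2 (by simpa using dotProduct_self_star_pos_iff.2 u.2.1)),
        ← Real.sqrt_mul hμ]
      exact Real.sqrt_le_sqrt (hH.sInf_eigenvalues_mul_dotProduct_self_le u.2.2)
    have : Nonempty {u : ι → ℝ // u ≠ 0 ∧ ∀ k : ι → ℝ, M *ᵥ k = 0 → u ⬝ᵥ k = 0} := ⟨⟨_, hmem⟩⟩
    refine le_antisymm (ciInf_le_of_le ⟨√μ, Set.forall_mem_range.2 hlow⟩ ⟨_, hmem⟩ ?_)
      (le_ciInf hlow)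
    rw [hval, hH.eigenvectorBasis_dotProduct_self, Real.sqrt_one, div_one]
  -- Here `M = 0`: the infimum runs over an empty type and `sInf ∅ = 0`, so both sides are `0`.
  · have hM (u : ι → ℝ) : M *ᵥ u = 0 := by
      rw [← dotProduct_self_eq_zero, ← dotProduct_transpose_mul_self_mulVec,
        ← hH.sum_eigenvalues_mul_sq_eigenvectorBasis_dotProduct]
      refine Finset.sum_eq_zero fun i _ ↦ ?_
      rw [not_not.1 fun hi ↦ hS ⟨_, hi, i, rfl⟩, zero_mul]
    have : IsEmpty {u : ι → ℝ // u ≠ 0 ∧ ∀ k : ι → ℝ, M *ᵥ k = 0 → u ⬝ᵥ k = 0} :=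
      ⟨fun u ↦ u.2.1 (dotProduct_self_eq_zero.1 (u.2.2 u.1 (hM u.1)))⟩
    rw [Real.iInf_of_isEmpty, Set.not_nonempty_iff_eq_empty.1 hS, Real.sInf_empty,
      Real.sqrt_zero]

end InfSup

lemma invSqrtPD_eq_inv_cfc_sqrt {n : ℕ} (D : Matrix (Fin n) (Fin n) ℝ) (hD : D.PosDef) :
    invSqrtPD D hD = (cfc Real.sqrt D)⁻¹ := by
  rw [hD.isHermitian.cfc_eq]
  rfl

theorem stmt_2_general {n : ℕ}
    (A : Matrix (Fin n) (Fin n) ℝ)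
    (D : Matrix (Fin n) (Fin n) ℝ) (hD : D.PosDef)
    (At : Matrix (Fin n) (Fin n) ℝ)
    (hAt : At = invSqrtPD D hD * A * invSqrtPD D hD)
    (hH : (At.transpose * At).IsHermitian) :
    (⨅ x : {x : Fin n → ℝ // x ≠ 0 ∧ ∀ k : Fin n → ℝ, A.mulVec k = 0 → x ⬝ᵥ D.mulVec k = 0},
      ⨆ y : {y : Fin n → ℝ // y ≠ 0},
        y.1 ⬝ᵥ A.mulVec x.1 /
          (Real.sqrt (y.1 ⬝ᵥ D.mulVec y.1) * Real.sqrt (x.1 ⬝ᵥ D.mulVec x.1)))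
      = Real.sqrt (sInf {μ : ℝ | μ ≠ 0 ∧ ∃ i : Fin n, hH.eigenvalues i = μ}) := by
  set R := cfc Real.sqrt D
  have hR : IsUnit R := hD.isUnit_cfc_sqrt
  have hdet : IsUnit R.det := (isUnit_iff_isUnit_det R).1 hR
  have hDR : D = Rᵀ * R := by rw [transpose_cfc_sqrt, hD.cfc_sqrt_mul_self]
  have hAR : A = Rᵀ * At * R := by
    rw [transpose_cfc_sqrt, hAt, invSqrtPD_eq_inv_cfc_sqrt, ← Matrix.mul_assoc, ← Matrix.mul_assoc,
      mul_nonsing_inv R hdet, Matrix.one_mul, nonsing_inv_mul_cancel_right R A hdet]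
  change infSupConstant A D = _
  rw [hAR, hDR, infSupConstant_transpose_mul_mul hR, iInf_sqrt_div_sqrt_eq_sqrt_sInf_eigenvalues]

/-- The inf-sup constant of the square system matrix `A`, relative to the norm with Gram
matrix `D` and taken over the `D`-orthogonal complement of the one-dimensional kernel of
`A`, equals the smallest positive singular value of `Ã = D^{-1/2} A D^{-1/2}`, i.e. the
square root of the smallest nonzero eigenvalue of `ÃᵀÃ`. -/
theorem stmt_2 {n : ℕ} (hn : 1 ≤ n)
    (A : Matrix (Fin n) (Fin n) ℝ)
    (hker : Module.finrank ℝ (LinearMap.ker A.mulVecLin) = 1)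
    (D : Matrix (Fin n) (Fin n) ℝ) (hD : D.PosDef)
    (At : Matrix (Fin n) (Fin n) ℝ)
    (hAt : At = invSqrtPD D hD * A * invSqrtPD D hD)
    (hH : (At.transpose * At).IsHermitian) :
    (⨅ x : {x : Fin n → ℝ // x ≠ 0 ∧ ∀ k : Fin n → ℝ, A.mulVec k = 0 → x ⬝ᵥ D.mulVec k = 0},
      ⨆ y : {y : Fin n → ℝ // y ≠ 0},
        y.1 ⬝ᵥ A.mulVec x.1 /
          (Real.sqrt (y.1 ⬝ᵥ D.mulVec y.1) * Real.sqrt (x.1 ⬝ᵥ D.mulVec x.1)))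
      = Real.sqrt (sInf {μ : ℝ | μ ≠ 0 ∧ ∃ i : Fin n, hH.eigenvalues i = μ}) :=
  stmt_2_general A D hD At hAt hH
end

section
/- Let V be a real vector space, let Q̃ be a real inner product space, and let e ∈ Q̃ be nonzero. Let ν ∈ (0,1/2], let F : V → ℝ be linear, and let A : V × V → ℝ and B : V × Q̃ → ℝ be bilinear forms with B(v,e) = 0 for all v ∈ V. If (u,p,r) ∈ V × Q̃ × ℝ satisfies A(u,v) + B(v,p) = F(v) for all v ∈ V, −B(u,q) + (1−2ν)⟨p,q⟩ − r⟨q,e⟩ = 0 for all q ∈ Q̃, and s·(⟨p,e⟩/⟨e,e⟩ − r) = 0 for all s ∈ ℝ, then ⟨p,e⟩ = 0 and r = 0. -/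
open scoped RealInnerProductSpace

theorem stmt_5_general
    {V Qt : Type*} [AddCommGroup V] [Module ℝ V]
    [NormedAddCommGroup Qt] [InnerProductSpace ℝ Qt]
    (e : Qt) (he : e ≠ 0) (ν : ℝ) (hν : ν ∈ Set.Ioc (0 : ℝ) (1 / 2))
    (B : V →ₗ[ℝ] Qt →ₗ[ℝ] ℝ)
    (hBe : ∀ v : V, B v e = 0)
    (u : V) (p : Qt) (r : ℝ)
    (h2 : ∀ q : Qt, -(B u q) + (1 - 2 * ν) * ⟪p, q⟫ - r * ⟪q, e⟫ = 0)
    (h3 : ∀ s : ℝ, s * (⟪p, e⟫ / ⟪e, e⟫ - r) = 0) :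
    ⟪p, e⟫ = 0 ∧ r = 0 := by
  have hr : r = ⟪p, e⟫ / ⟪e, e⟫ := (sub_eq_zero.mp (by simpa using h3 1)).symm
  have hre : r * ⟪e, e⟫ = ⟪p, e⟫ := by
    rw [hr, div_mul_cancel₀ _ (inner_self_ne_zero.mpr he)]
  -- Testing with the constant `q = e` removes `B`, and the multiplier term cancels
  -- all of `⟪p, e⟫` except `-2ν ⟪p, e⟫`.
  have htest : (1 - 2 * ν) * ⟪p, e⟫ - r * ⟪e, e⟫ = 0 := by simpa [hBe u] using h2 e
  have hνpe : ν * ⟪p, e⟫ = 0 := by linarith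
  have hpe : ⟪p, e⟫ = 0 := (mul_eq_zero.mp hνpe).resolve_left hν.1.ne'
  exact ⟨hpe, by rw [hr, hpe, zero_div]⟩

/-- Any solution of the augmented formulation has zero-mean pressure and
vanishing Lagrange multiplier. -/
theorem stmt_5
    {V Qt : Type*} [AddCommGroup V] [Module ℝ V]
    [NormedAddCommGroup Qt] [InnerProductSpace ℝ Qt]
    (e : Qt) (he : e ≠ 0) (ν : ℝ) (hν : ν ∈ Set.Ioc (0 : ℝ) (1 / 2))
    (F : V →ₗ[ℝ] ℝ) (A : V →ₗ[ℝ] V →ₗ[ℝ] ℝ) (B : V →ₗ[ℝ] Qt →ₗ[ℝ] ℝ)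
    (hBe : ∀ v : V, B v e = 0)
    (u : V) (p : Qt) (r : ℝ)
    (h1 : ∀ v : V, A u v + B v p = F v)
    (h2 : ∀ q : Qt, -(B u q) + (1 - 2 * ν) * ⟪p, q⟫ - r * ⟪q, e⟫ = 0)
    (h3 : ∀ s : ℝ, s * (⟪p, e⟫ / ⟪e, e⟫ - r) = 0) :
    ⟪p, e⟫ = 0 ∧ r = 0 :=
  stmt_5_general e he ν hν B hBe u p r h2 h3
end
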